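/- arXiv:math/9801136 — 2 statements merged into one kernel-verified Lean document; each statement's English description precedes it below -/
import Mathlib

section
/- In the Lie algebra 𝒟 of regular differential operators on the circle, the following commutation relation with 2-cocycle holds: [t^r f(D), t^s g(D)] = t^{r+s}(f(D+s)g(D) - f(D)g(D+r)) + Ψ(t^r f(D), t^s g(D))·C, where Ψ(t^r f(D), t^{-r} g(D)) = Σ_{-r ≤ j ≤ -1} f(j) g(j+r) for r ≥ 0, Ψ = 0 when the degrees don't sum to zero, defines a 2-cocycle, i.e., Ψ is bilinear, antisymmetric on the relevant pairs, and satisfies the cocycle identity Ψ([a,b],c) + Ψ([b,c],a) + Ψ([c,a],b) = 0. -/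
open Polynomial

/-- The Lie algebra `𝒟` of regular differential operators on the circle,
modeled as finitely supported families `(f_k)_{k ∈ ℤ}`, `a` representing
`Σ_k t^k (a k)(D)` with `D = t ∂_t`. -/
noncomputable abbrev DOp := ℤ →₀ Polynomial ℂ

/-- Associative product `(t^k f(D)) ⬝ (t^l g(D)) = t^{k+l} f(D+l) g(D)`. -/
noncomputable def DOp.mul (a b : DOp) : DOp :=
  a.sum fun k f => b.sum fun l g =>
    Finsupp.single (k + l) (f.comp (X + C (l : ℂ)) * g)

/-- The Lie bracket `[t^r f(D), t^s g(D)] = t^{r+s}(f(D+s)g(D) - f(D)g(D+r))`. -/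
noncomputable def DOp.lieb (a b : DOp) : DOp := DOp.mul a b - DOp.mul b a

/-- `Ψ(t^r f(D), t^{-r} g(D)) = Σ_{-r ≤ j ≤ -1} f(j) g(j+r)` for `r ≥ 0`,
extended antisymmetrically to `r < 0`. -/
noncomputable def psiPair (r : ℤ) (f g : Polynomial ℂ) : ℂ :=
  if 0 ≤ r then ∑ i ∈ Finset.range r.toNat, f.eval (-(i + 1 : ℂ)) * g.eval ((r : ℂ) - (i + 1))
  else -∑ i ∈ Finset.range (-r).toNat, g.eval (-(i + 1 : ℂ)) * f.eval ((-r : ℂ) - (i + 1))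

/-- The 2-cocycle `Ψ` on `𝒟` (vanishing on pairs whose degrees do not sum to zero). -/
noncomputable def Psi (a b : DOp) : ℂ :=
  a.sum fun k f => psiPair k f (b (-k))

/- ### A signed interval sum -/

noncomputable def Sint (a b : ℤ) (F : ℤ → ℂ) : ℂ :=
  (∑ i ∈ Finset.range (b - a).toNat, F (a + i)) - ∑ i ∈ Finset.range (a - b).toNat, F (b + i)

lemma Sint_self (a : ℤ) (F : ℤ → ℂ) : Sint a a F = 0 := by simp [Sint]

lemma Sint_succ (a b : ℤ) (F : ℤ → ℂ) : Sint a (b + 1) F = Sint a b F + F b := by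
  unfold Sint
  rcases le_or_gt a b with h | h
  · have h1 : (b + 1 - a).toNat = (b - a).toNat + 1 := by omega
    have h2 : (a - (b + 1)).toNat = 0 := by omega
    have h3 : (a - b).toNat = 0 := by omega
    rw [h1, h2, h3, Finset.sum_range_succ]
    have e : a + ((b - a).toNat : ℤ) = b := by omega
    rw [e]
    simp only [Finset.range_zero, Finset.sum_empty, sub_zero]
  · have h1 : (b + 1 - a).toNat = 0 := by omega
    have h2 : (b - a).toNat = 0 := by omega
    have h3 : (a - b).toNat = (a - (b + 1)).toNat + 1 := by omega
    rw [h1, h2, h3, Finset.sum_range_succ']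
    have e : ∀ i : ℕ, F (b + ((i : ℤ) + 1)) = F (b + 1 + i) := by
      intro i; congr 1; ring
    simp only [Finset.range_zero, Finset.sum_empty, Nat.cast_add, Nat.cast_one, Nat.cast_zero,
      add_zero, e]
    ring

lemma Sint_pred (a b : ℤ) (F : ℤ → ℂ) : Sint a (b - 1) F = Sint a b F - F (b - 1) := by
  have := Sint_succ a (b - 1) F
  rw [sub_add_cancel] at this
  rw [this]; ring

lemma Sint_trans (a b c : ℤ) (F : ℤ → ℂ) : Sint a b F + Sint b c F = Sint a c F := by
  have key : ∀ d : ℤ, Sint a b F + Sint b (b + d) F = Sint a (b + d) F := by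
    intro d
    induction d using Int.induction_on with
    | zero => simp [Sint_self]
    | succ k ih =>
        have e : b + ((k : ℤ) + 1) = (b + k) + 1 := by ring
        rw [e, Sint_succ, Sint_succ]; linear_combination ih
    | pred k ih =>
        have e : b + (-(k : ℤ) - 1) = (b + -k) - 1 := by ring
        rw [e, Sint_pred, Sint_pred]; linear_combination ih
  have := key (c - b)
  rwa [add_sub_cancel] at this

lemma Sint_sub (a b : ℤ) (F G : ℤ → ℂ) :
    Sint a b (fun j => F j - G j) = Sint a b F - Sint a b G := by
  simp [Sint, Finset.sum_sub_distrib]; ring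

lemma Sint_add (a b : ℤ) (F G : ℤ → ℂ) :
    Sint a b (fun j => F j + G j) = Sint a b F + Sint a b G := by
  simp [Sint, Finset.sum_add_distrib]; ring

lemma Sint_smul (a b : ℤ) (c : ℂ) (F : ℤ → ℂ) :
    Sint a b (fun j => c * F j) = c * Sint a b F := by
  simp [Sint, ← Finset.mul_sum]; ring

lemma Sint_zero_fun (a b : ℤ) : Sint a b (fun _ => (0 : ℂ)) = 0 := by simp [Sint]

lemma Sint_shift (a b c : ℤ) (F : ℤ → ℂ) :
    Sint a b (fun j => F (j + c)) = Sint (a + c) (b + c) F := by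
  unfold Sint
  have e1 : (b + c - (a + c)) = b - a := by ring
  have e2 : (a + c - (b + c)) = a - b := by ring
  rw [e1, e2]
  congr 1 <;> (apply Finset.sum_congr rfl; intro i _; ring_nf)

lemma Sint_neg (a b : ℤ) (F : ℤ → ℂ) : Sint a b F = -Sint b a F := by
  simp only [Sint]; ring

lemma Sint_congr (a b : ℤ) {F G : ℤ → ℂ} (h : ∀ j, F j = G j) : Sint a b F = Sint a b G := by
  have : F = G := funext h
  rw [this]

/- ### psiPair via Sint -/

lemma psiPair_eq (r : ℤ) (f g : Polynomial ℂ) :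
    psiPair r f g = Sint (-r) 0 (fun j => f.eval (j : ℂ) * g.eval ((j : ℂ) + (r : ℂ))) := by
  unfold psiPair Sint
  by_cases hr : 0 ≤ r
  · rw [if_pos hr]
    have h1 : (0 - -r).toNat = r.toNat := by omega
    have h2 : (-r - 0 : ℤ).toNat = 0 := by omega
    rw [h1, h2]
    simp only [Finset.range_zero, Finset.sum_empty, sub_zero]
    rw [← Finset.sum_range_reflect]
    apply Finset.sum_congr rfl
    intro i hi
    simp only [Finset.mem_range] at hi
    have hz : ((r.toNat - 1 - i : ℕ) : ℂ) = (r : ℂ) - 1 - i := by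
      have h : ((r.toNat - 1 - i : ℕ) : ℤ) = r - 1 - i := by omega
      calc ((r.toNat - 1 - i : ℕ) : ℂ) = (((r.toNat - 1 - i : ℕ) : ℤ) : ℂ) := by push_cast; ring
        _ = (r : ℂ) - 1 - i := by rw [h]; push_cast; ring
    rw [hz]
    push_cast
    ring_nf
  · rw [if_neg hr]
    have h1 : (0 - -r).toNat = 0 := by omega
    have h2 : (-r - 0 : ℤ).toNat = (-r).toNat := by omega
    rw [h1, h2]
    simp only [Finset.range_zero, Finset.sum_empty, zero_sub, neg_inj]
    rw [← Finset.sum_range_reflect]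
    apply Finset.sum_congr rfl
    intro i hi
    simp only [Finset.mem_range] at hi
    have hz : (((-r).toNat - 1 - i : ℕ) : ℂ) = -(r : ℂ) - 1 - i := by
      have h : (((-r).toNat - 1 - i : ℕ) : ℤ) = -r - 1 - i := by omega
      calc (((-r).toNat - 1 - i : ℕ) : ℂ) = ((((-r).toNat - 1 - i : ℕ) : ℤ) : ℂ) := by
            push_cast; ring
        _ = -(r : ℂ) - 1 - i := by rw [h]; push_cast; ring
    rw [hz]
    push_cast
    ring_nf

lemma psiPair_zero_left (r : ℤ) (g : Polynomial ℂ) : psiPair r 0 g = 0 := by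
  rw [psiPair_eq]
  rw [Sint_congr (-r) 0 (G := fun _ => (0 : ℂ)) (by intro j; simp), Sint_zero_fun]

lemma psiPair_zero_right (r : ℤ) (f : Polynomial ℂ) : psiPair r f 0 = 0 := by
  rw [psiPair_eq]
  rw [Sint_congr (-r) 0 (G := fun _ => (0 : ℂ)) (by intro j; simp), Sint_zero_fun]

lemma psiPair_add_left (r : ℤ) (f f' g : Polynomial ℂ) :
    psiPair r (f + f') g = psiPair r f g + psiPair r f' g := by
  rw [psiPair_eq, psiPair_eq, psiPair_eq, ← Sint_add]
  apply Sint_congr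
  intro j; simp [add_mul]

lemma psiPair_add_right (r : ℤ) (f g g' : Polynomial ℂ) :
    psiPair r f (g + g') = psiPair r f g + psiPair r f g' := by
  rw [psiPair_eq, psiPair_eq, psiPair_eq, ← Sint_add]
  apply Sint_congr
  intro j; simp [mul_add]

lemma psiPair_smul_left (r : ℤ) (c : ℂ) (f g : Polynomial ℂ) :
    psiPair r (c • f) g = c * psiPair r f g := by
  rw [psiPair_eq, psiPair_eq, ← Sint_smul]
  apply Sint_congr
  intro j; simp; ring

lemma psiPair_smul_right (r : ℤ) (c : ℂ) (f g : Polynomial ℂ) :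
    psiPair r f (c • g) = c * psiPair r f g := by
  rw [psiPair_eq, psiPair_eq, ← Sint_smul]
  apply Sint_congr
  intro j; simp; ring

lemma psiPair_antisymm (r : ℤ) (f g : Polynomial ℂ) :
    psiPair r f g = -psiPair (-r) g f := by
  rw [psiPair_eq, psiPair_eq, neg_neg]
  have h1 : Sint r 0 (fun j => g.eval (j : ℂ) * f.eval ((j : ℂ) + ((-r : ℤ) : ℂ)))
      = -Sint 0 r (fun j => g.eval (j : ℂ) * f.eval ((j : ℂ) + ((-r : ℤ) : ℂ))) :=
    Sint_neg _ _ _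
  rw [h1, neg_neg]
  have h2 := Sint_shift (-r) 0 r (fun j => g.eval (j : ℂ) * f.eval ((j : ℂ) + ((-r : ℤ) : ℂ)))
  simp only [neg_add_cancel, zero_add] at h2
  rw [← h2]
  apply Sint_congr
  intro j
  push_cast
  ring_nf

/- ### Psi basic lemmas -/

lemma Psi_single_left (m : ℤ) (p : Polynomial ℂ) (b : DOp) :
    Psi (Finsupp.single m p) b = psiPair m p (b (-m)) := by
  unfold Psi
  exact Finsupp.sum_single_index (psiPair_zero_left m _)

lemma Psi_add_left (a a' b : DOp) : Psi (a + a') b = Psi a b + Psi a' b := by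
  unfold Psi
  exact Finsupp.sum_add_index' (fun k => psiPair_zero_left k _)
    (fun k f f' => psiPair_add_left k f f' _)

lemma Psi_smul_left (c : ℂ) (a b : DOp) : Psi (c • a) b = c * Psi a b := by
  unfold Psi
  rw [Finsupp.sum_smul_index' (h := fun k f => psiPair k f (b (-k)))
    (fun k => psiPair_zero_left k _)]
  rw [Finsupp.mul_sum]
  exact Finsupp.sum_congr fun k _ => psiPair_smul_left k c _ _

lemma Psi_add_right (a b b' : DOp) : Psi a (b + b') = Psi a b + Psi a b' := by
  unfold Psi
  rw [← Finsupp.sum_add]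
  apply Finsupp.sum_congr
  intro k _
  rw [Finsupp.add_apply, psiPair_add_right]

lemma Psi_smul_right (c : ℂ) (a b : DOp) : Psi a (c • b) = c * Psi a b := by
  unfold Psi
  rw [Finsupp.mul_sum]
  apply Finsupp.sum_congr
  intro k _
  rw [Finsupp.smul_apply, psiPair_smul_right]

lemma Psi_zero_left (b : DOp) : Psi 0 b = 0 := by simp [Psi]

lemma Psi_zero_right (a : DOp) : Psi a 0 = 0 := by
  unfold Psi
  apply Finset.sum_eq_zero
  intro k _
  simp [psiPair_zero_right]

lemma Psi_eq_sum_subset (a b : DOp) {T : Finset ℤ} (hT : a.support ⊆ T) :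
    Psi a b = ∑ k ∈ T, psiPair k (a k) (b (-k)) := by
  unfold Psi Finsupp.sum
  apply Finset.sum_subset hT
  intro k _ hk
  simp only [Finsupp.notMem_support_iff.mp hk, psiPair_zero_left]

lemma Psi_antisymm (a b : DOp) : Psi a b = -Psi b a := by
  set U : Finset ℤ := a.support ∪ b.support with hU
  set T : Finset ℤ := U ∪ U.image (fun k => -k) with hT
  have hUT : U ⊆ T := Finset.subset_union_left
  have haT : a.support ⊆ T := (Finset.subset_union_left).trans hUT
  have hbT : b.support ⊆ T := (Finset.subset_union_right).trans hUT
  have hTneg : ∀ k ∈ T, -k ∈ T := by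
    intro k hk
    rw [hT, Finset.mem_union] at hk ⊢
    rcases hk with hk | hk
    · right; exact Finset.mem_image_of_mem _ hk
    · left
      rcases Finset.mem_image.mp hk with ⟨u, hu, huk⟩
      rwa [← huk, neg_neg]
  rw [Psi_eq_sum_subset a b haT, Psi_eq_sum_subset b a hbT]
  rw [← Finset.sum_neg_distrib]
  rw [Finset.sum_nbij' (i := fun k => -k) (j := fun k => -k)]
  · intro k hk; exact hTneg k hk
  · intro k hk; exact hTneg k hk
  · intro k _; rw [neg_neg]
  · intro k _; rw [neg_neg]
  · intro k _
    rw [← psiPair_antisymm, neg_neg]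

/- ### DOp.mul / lieb basic lemmas -/

lemma DOp.mul_single_single (k l : ℤ) (f g : Polynomial ℂ) :
    DOp.mul (Finsupp.single k f) (Finsupp.single l g)
      = Finsupp.single (k + l) (f.comp (X + C (l : ℂ)) * g) := by
  unfold DOp.mul
  rw [Finsupp.sum_single_index, Finsupp.sum_single_index]
  · simp
  · rw [Finsupp.sum_single_index] <;> simp

lemma DOp.mul_zero_left (b : DOp) : DOp.mul 0 b = 0 := by
  simp [DOp.mul]

lemma DOp.mul_zero_right (a : DOp) : DOp.mul a 0 = 0 := by
  unfold DOp.mul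
  apply Finset.sum_eq_zero
  intro k _
  simp

lemma DOp.mul_add_left (a a' b : DOp) :
    DOp.mul (a + a') b = DOp.mul a b + DOp.mul a' b := by
  unfold DOp.mul
  apply Finsupp.sum_add_index'
  · intro k; apply Finset.sum_eq_zero; intro l _; simp
  · intro k f f'
    rw [← Finsupp.sum_add]
    apply Finsupp.sum_congr
    intro l _
    rw [← Finsupp.single_add, add_comp, add_mul]

lemma DOp.mul_add_right (a b b' : DOp) :
    DOp.mul a (b + b') = DOp.mul a b + DOp.mul a b' := by
  unfold DOp.mul
  rw [← Finsupp.sum_add]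
  apply Finsupp.sum_congr
  intro k _
  apply Finsupp.sum_add_index'
  · intro l; simp
  · intro l g g'
    rw [← Finsupp.single_add, mul_add]

lemma DOp.lieb_zero_left (b : DOp) : DOp.lieb 0 b = 0 := by
  simp [DOp.lieb, DOp.mul_zero_left, DOp.mul_zero_right]

lemma DOp.lieb_zero_right (a : DOp) : DOp.lieb a 0 = 0 := by
  simp [DOp.lieb, DOp.mul_zero_left, DOp.mul_zero_right]

lemma DOp.lieb_add_left (a a' b : DOp) :
    DOp.lieb (a + a') b = DOp.lieb a b + DOp.lieb a' b := by
  simp only [DOp.lieb, DOp.mul_add_left, DOp.mul_add_right]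
  abel

lemma DOp.lieb_add_right (a b b' : DOp) :
    DOp.lieb a (b + b') = DOp.lieb a b + DOp.lieb a b' := by
  simp only [DOp.lieb, DOp.mul_add_left, DOp.mul_add_right]
  abel

lemma DOp.lieb_single_single (r s : ℤ) (f g : Polynomial ℂ) :
    DOp.lieb (Finsupp.single r f) (Finsupp.single s g)
      = Finsupp.single (r + s) (f.comp (X + C (s : ℂ)) * g - g.comp (X + C (r : ℂ)) * f) := by
  unfold DOp.lieb
  rw [DOp.mul_single_single, DOp.mul_single_single, add_comm s r, Finsupp.single_sub]

/- ### The key computation for single generators -/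

lemma key_identity (r s u : ℤ) (hu : r + s + u = 0) (f g h : Polynomial ℂ) :
    psiPair (r + s) (f.comp (X + C (s : ℂ)) * g - g.comp (X + C (r : ℂ)) * f) h
    + psiPair (s + u) (g.comp (X + C (u : ℂ)) * h - h.comp (X + C (s : ℂ)) * g) f
    + psiPair (u + r) (h.comp (X + C (r : ℂ)) * f - f.comp (X + C (u : ℂ)) * h) g = 0 := by
  have hu' : u = -r - s := by omega
  subst hu'
  set FA : ℤ → ℂ := fun j => f.eval ((j : ℂ) + s) * g.eval (j : ℂ) * h.eval ((j : ℂ) + r + s)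
    with hFA
  set FB : ℤ → ℂ := fun j => f.eval (j : ℂ) * g.eval ((j : ℂ) + r) * h.eval ((j : ℂ) + r + s)
    with hFB
  rw [psiPair_eq, psiPair_eq, psiPair_eq]
  have e1 : Sint (-(r + s)) 0
      (fun j => (f.comp (X + C (s : ℂ)) * g - g.comp (X + C (r : ℂ)) * f).eval (j : ℂ)
        * h.eval ((j : ℂ) + ((r + s : ℤ) : ℂ)))
      = Sint (-(r + s)) 0 FA - Sint (-(r + s)) 0 FB := by
    rw [← Sint_sub]
    apply Sint_congr
    intro j
    simp only [hFA, hFB, eval_sub, eval_mul, eval_comp, eval_add, eval_X, eval_C]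
    push_cast
    ring
  have e2 : Sint (-(s + (-r - s))) 0
      (fun j => (g.comp (X + C ((-r - s : ℤ) : ℂ)) * h - h.comp (X + C (s : ℂ)) * g).eval (j : ℂ)
        * f.eval ((j : ℂ) + ((s + (-r - s) : ℤ) : ℂ)))
      = Sint (-s) (-r - s) FA - Sint 0 (-r) FB := by
    have hb : (-(s + (-r - s))) = r := by ring
    rw [hb]
    have step : Sint r 0
        (fun j => (g.comp (X + C ((-r - s : ℤ) : ℂ)) * h - h.comp (X + C (s : ℂ)) * g).eval (j : ℂ)
          * f.eval ((j : ℂ) + ((s + (-r - s) : ℤ) : ℂ)))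
        = Sint r 0 (fun j => FA (j + (-r - s)) - FB (j + (-r))) := by
      apply Sint_congr
      intro j
      simp only [hFA, hFB, eval_sub, eval_mul, eval_comp, eval_add, eval_X, eval_C]
      push_cast
      ring
    rw [step, Sint_sub]
    have sA := Sint_shift r 0 (-r - s) FA
    have sB := Sint_shift r 0 (-r) FB
    rw [sA, sB, show r + (-r - s) = -s from by ring, show (0 : ℤ) + (-r - s) = -r - s from by ring,
      show r + -r = (0 : ℤ) from by ring, show (0 : ℤ) + -r = -r from by ring]
  have e3 : Sint (-(-r - s + r)) 0
      (fun j => (h.comp (X + C (r : ℂ)) * f - f.comp (X + C ((-r - s : ℤ) : ℂ)) * h).eval (j : ℂ)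
        * g.eval ((j : ℂ) + ((-r - s + r : ℤ) : ℂ)))
      = Sint 0 (-s) FA - Sint (-r) (-r - s) FB := by
    have hb : (-(-r - s + r)) = s := by ring
    rw [hb]
    have step : Sint s 0
        (fun j => (h.comp (X + C (r : ℂ)) * f - f.comp (X + C ((-r - s : ℤ) : ℂ)) * h).eval (j : ℂ)
          * g.eval ((j : ℂ) + ((-r - s + r : ℤ) : ℂ)))
        = Sint s 0 (fun j => FA (j + (-s)) - FB (j + (-r - s))) := by
      apply Sint_congr
      intro j
      simp only [hFA, hFB, eval_sub, eval_mul, eval_comp, eval_add, eval_X, eval_C]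
      push_cast
      ring
    rw [step, Sint_sub]
    have sA := Sint_shift s 0 (-s) FA
    have sB := Sint_shift s 0 (-r - s) FB
    rw [sA, sB, show s + -s = (0 : ℤ) from by ring, show (0 : ℤ) + -s = -s from by ring,
      show s + (-r - s) = -r from by ring, show (0 : ℤ) + (-r - s) = -r - s from by ring]
  rw [e1, e2, e3]
  have hA : Sint (-(r + s)) 0 FA + Sint (-s) (-r - s) FA + Sint 0 (-s) FA = 0 := by
    have h1 : Sint 0 (-s) FA + Sint (-s) (-r - s) FA = Sint 0 (-r - s) FA := Sint_trans _ _ _ _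
    have h2 : Sint 0 (-r - s) FA + Sint (-r - s) 0 FA = Sint 0 0 FA := Sint_trans _ _ _ _
    have h3 : Sint 0 0 FA = 0 := Sint_self _ _
    have h4 : Sint (-(r + s)) 0 FA = Sint (-r - s) 0 FA := by
      rw [show -(r + s) = -r - s from by ring]
    rw [h4]
    linear_combination h1 + h2 + h3
  have hB : Sint (-(r + s)) 0 FB + Sint 0 (-r) FB + Sint (-r) (-r - s) FB = 0 := by
    have h1 : Sint 0 (-r) FB + Sint (-r) (-r - s) FB = Sint 0 (-r - s) FB := Sint_trans _ _ _ _
    have h2 : Sint (-r - s) 0 FB + Sint 0 (-r - s) FB = Sint (-r - s) (-r - s) FB :=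
      Sint_trans _ _ _ _
    have h3 : Sint (-r - s) (-r - s) FB = 0 := Sint_self _ _
    have h4 : Sint (-(r + s)) 0 FB = Sint (-r - s) 0 FB := by
      rw [show -(r + s) = -r - s from by ring]
    rw [h4]
    linear_combination h1 + h2 + h3
  linear_combination hA - hB

lemma cocycle_single (r s u : ℤ) (f g h : Polynomial ℂ) :
    Psi (DOp.lieb (Finsupp.single r f) (Finsupp.single s g)) (Finsupp.single u h)
    + Psi (DOp.lieb (Finsupp.single s g) (Finsupp.single u h)) (Finsupp.single r f)
    + Psi (DOp.lieb (Finsupp.single u h) (Finsupp.single r f)) (Finsupp.single s g) = 0 := by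
  rw [DOp.lieb_single_single, DOp.lieb_single_single, DOp.lieb_single_single,
    Psi_single_left, Psi_single_left, Psi_single_left]
  by_cases hu : r + s + u = 0
  · have h1 : (Finsupp.single u h : DOp) (-(r + s)) = h := by
      rw [Finsupp.single_apply, if_pos (by omega)]
    have h2 : (Finsupp.single r f : DOp) (-(s + u)) = f := by
      rw [Finsupp.single_apply, if_pos (by omega)]
    have h3 : (Finsupp.single s g : DOp) (-(u + r)) = g := by
      rw [Finsupp.single_apply, if_pos (by omega)]
    rw [h1, h2, h3]
    exact key_identity r s u hu f g h
  · have h1 : (Finsupp.single u h : DOp) (-(r + s)) = 0 := by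
      rw [Finsupp.single_apply, if_neg (by omega)]
    have h2 : (Finsupp.single r f : DOp) (-(s + u)) = 0 := by
      rw [Finsupp.single_apply, if_neg (by omega)]
    have h3 : (Finsupp.single s g : DOp) (-(u + r)) = 0 := by
      rw [Finsupp.single_apply, if_neg (by omega)]
    rw [h1, h2, h3, psiPair_zero_right, psiPair_zero_right, psiPair_zero_right]
    ring

lemma cocycle (a b c : DOp) :
    Psi (DOp.lieb a b) c + Psi (DOp.lieb b c) a + Psi (DOp.lieb c a) b = 0 := by
  induction a using Finsupp.induction with
  | zero =>
      simp [DOp.lieb_zero_left, DOp.lieb_zero_right, Psi_zero_left, Psi_zero_right]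
  | single_add r f a _ _ iha =>
      have expand :
          Psi (DOp.lieb (Finsupp.single r f + a) b) c
            + Psi (DOp.lieb b c) (Finsupp.single r f + a)
            + Psi (DOp.lieb c (Finsupp.single r f + a)) b
          = (Psi (DOp.lieb (Finsupp.single r f) b) c + Psi (DOp.lieb b c) (Finsupp.single r f)
              + Psi (DOp.lieb c (Finsupp.single r f)) b)
            + (Psi (DOp.lieb a b) c + Psi (DOp.lieb b c) a + Psi (DOp.lieb c a) b) := by
        rw [DOp.lieb_add_left, DOp.lieb_add_right, Psi_add_left, Psi_add_left, Psi_add_right]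
        ring
      rw [expand, iha, add_zero]
      clear iha expand
      induction b using Finsupp.induction with
      | zero =>
          simp [DOp.lieb_zero_left, DOp.lieb_zero_right, Psi_zero_left, Psi_zero_right]
      | single_add s g b _ _ ihb =>
          have expand :
              Psi (DOp.lieb (Finsupp.single r f) (Finsupp.single s g + b)) c
                + Psi (DOp.lieb (Finsupp.single s g + b) c) (Finsupp.single r f)
                + Psi (DOp.lieb c (Finsupp.single r f)) (Finsupp.single s g + b)
              = (Psi (DOp.lieb (Finsupp.single r f) (Finsupp.single s g)) c
                  + Psi (DOp.lieb (Finsupp.single s g) c) (Finsupp.single r f)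
                  + Psi (DOp.lieb c (Finsupp.single r f)) (Finsupp.single s g))
                + (Psi (DOp.lieb (Finsupp.single r f) b) c + Psi (DOp.lieb b c) (Finsupp.single r f)
                  + Psi (DOp.lieb c (Finsupp.single r f)) b) := by
            rw [DOp.lieb_add_right, DOp.lieb_add_left, Psi_add_left, Psi_add_left, Psi_add_right]
            ring
          rw [expand, ihb, add_zero]
          clear ihb expand
          induction c using Finsupp.induction with
          | zero =>
              simp [DOp.lieb_zero_left, DOp.lieb_zero_right, Psi_zero_left, Psi_zero_right]
          | single_add u h c _ _ ihc =>
              have expand :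
                  Psi (DOp.lieb (Finsupp.single r f) (Finsupp.single s g)) (Finsupp.single u h + c)
                    + Psi (DOp.lieb (Finsupp.single s g) (Finsupp.single u h + c))
                        (Finsupp.single r f)
                    + Psi (DOp.lieb (Finsupp.single u h + c) (Finsupp.single r f))
                        (Finsupp.single s g)
                  = (Psi (DOp.lieb (Finsupp.single r f) (Finsupp.single s g)) (Finsupp.single u h)
                      + Psi (DOp.lieb (Finsupp.single s g) (Finsupp.single u h))
                          (Finsupp.single r f)
                      + Psi (DOp.lieb (Finsupp.single u h) (Finsupp.single r f))
                          (Finsupp.single s g))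
                    + (Psi (DOp.lieb (Finsupp.single r f) (Finsupp.single s g)) c
                      + Psi (DOp.lieb (Finsupp.single s g) c) (Finsupp.single r f)
                      + Psi (DOp.lieb c (Finsupp.single r f)) (Finsupp.single s g)) := by
                rw [DOp.lieb_add_right, DOp.lieb_add_left, Psi_add_left, Psi_add_left,
                  Psi_add_right]
                ring
              rw [expand, ihc, add_zero]
              exact cocycle_single r s u f g h


/-- `Ψ` is bilinear, antisymmetric, and satisfies the 2-cocycle identity
`Ψ([a,b],c) + Ψ([b,c],a) + Ψ([c,a],b) = 0` for the bracket
`[t^r f(D), t^s g(D)] = t^{r+s}(f(D+s)g(D) - f(D)g(D+r))`. -/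
theorem Psi_is_two_cocycle :
    (∀ a a' b : DOp, Psi (a + a') b = Psi a b + Psi a' b) ∧
    (∀ (c : ℂ) (a b : DOp), Psi (c • a) b = c * Psi a b) ∧
    (∀ a b b' : DOp, Psi a (b + b') = Psi a b + Psi a b') ∧
    (∀ (c : ℂ) (a b : DOp), Psi a (c • b) = c * Psi a b) ∧
    (∀ a b : DOp, Psi a b = -Psi b a) ∧
    (∀ a b c : DOp,
      Psi (DOp.lieb a b) c + Psi (DOp.lieb b c) a + Psi (DOp.lieb c a) b = 0) := by
  exact ⟨Psi_add_left, Psi_smul_left, Psi_add_right, Psi_smul_right, Psi_antisymm, cocycle⟩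
end

section
/- For the Lie algebra 𝒟⁺ (differential operators anti-fixed by σ_{+,-1}) with grading 𝒟⁺_k = {t^k g(D + (k+1)/2) : g odd polynomial}, one has [𝒟⁺_1, 𝒟⁺_k] = 𝒟⁺_{k+1} for k > 1, while 𝒟⁺_2 = [𝒟⁺_1, 𝒟⁺_1] ⊕ ℂ·t²(D + 3/2). -/
open Polynomial

/-- The space of odd polynomials over ℂ. -/
noncomputable def oddPoly : Submodule ℂ (Polynomial ℂ) where
  carrier := {q | q.comp (-X) = -q}
  add_mem' := by
    intro p q hp hq
    simp only [Set.mem_setOf_eq, add_comp] at *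
    rw [hp, hq]; ring
  zero_mem' := by simp
  smul_mem' := by
    intro c p hp
    simp only [Set.mem_setOf_eq, smul_comp] at *
    rw [hp]; simp

/-- In the graded Lie algebra `𝒟⁺`, with degree-`k` piece `{t^k g(D + (k+1)/2) : g odd}`,
the bracket of `t^r g₁(D + (r+1)/2)` and `t^s g₂(D + (s+1)/2)` is
`t^{r+s} h(D + (r+s+1)/2)` with `h` as follows. -/
noncomputable def brPolyPlus (r s : ℤ) (g₁ g₂ : Polynomial ℂ) : Polynomial ℂ :=
  g₁.comp (X + C ((s : ℂ) / 2)) * g₂.comp (X - C ((r : ℂ) / 2)) -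
    g₁.comp (X - C ((s : ℂ) / 2)) * g₂.comp (X + C ((r : ℂ) / 2))

/-- The set of brackets `[𝒟⁺_r, 𝒟⁺_s]` (as polynomials in the shifted variable). -/
def bracketSet (r s : ℤ) : Set (Polynomial ℂ) :=
  {q | ∃ g₁ g₂ : Polynomial ℂ, g₁.comp (-X) = -g₁ ∧ g₂.comp (-X) = -g₂ ∧
    q = brPolyPlus r s g₁ g₂}

/-! ### Auxiliary lemmas -/

lemma mem_oddPoly {q : Polynomial ℂ} : q ∈ oddPoly ↔ q.comp (-X) = -q := Iff.rfl

lemma coeff_comp_neg_X (p : Polynomial ℂ) (i : ℕ) :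
    (p.comp (-X)).coeff i = (-1)^i * p.coeff i := by
  induction p using Polynomial.induction_on' with
  | add p q hp hq => simp [add_comp, hp, hq, mul_add]
  | monomial n a =>
    rw [monomial_comp, neg_pow, coeff_monomial]
    rw [show (-1 : Polynomial ℂ)^n * X^n = C ((-1)^n) * X^n by simp]
    rw [mul_left_comm, coeff_C_mul, coeff_C_mul, coeff_X_pow]
    rcases eq_or_ne n i with h | h
    · subst h; simp
    · simp [h, Ne.symm h]

lemma odd_coeff_even (p : Polynomial ℂ) (hp : p.comp (-X) = -p) {i : ℕ} (hi : Even i) :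
    p.coeff i = 0 := by
  have := coeff_comp_neg_X p i
  rw [hp, coeff_neg, hi.neg_one_pow, one_mul] at this
  linear_combination (-1/2 : ℂ) * this

lemma comp_shift_neg (g : Polynomial ℂ) (hg : g.comp (-X) = -g) (a : ℂ) :
    (g.comp (X + C a)).comp (-X) = -(g.comp (X - C a)) := by
  rw [comp_assoc]
  have : (X + C a).comp (-X : Polynomial ℂ) = (-X).comp (X - C a) := by
    simp [sub_comp, add_comp]; ring
  rw [this, ← comp_assoc, hg, neg_comp]

lemma br_odd (r s : ℤ) (g₁ g₂ : Polynomial ℂ) (h₁ : g₁.comp (-X) = -g₁)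
    (h₂ : g₂.comp (-X) = -g₂) : (brPolyPlus r s g₁ g₂).comp (-X) = -(brPolyPlus r s g₁ g₂) := by
  have e1 := comp_shift_neg g₁ h₁ ((s : ℂ)/2)
  have e2 := comp_shift_neg g₂ h₂ ((r : ℂ)/2)
  have e1' : (g₁.comp (X - C ((s:ℂ)/2))).comp (-X) = -(g₁.comp (X + C ((s:ℂ)/2))) := by
    have := comp_shift_neg g₁ h₁ (-((s : ℂ)/2))
    simpa [sub_neg_eq_add, ← sub_eq_add_neg, map_neg] using this
  have e2' : (g₂.comp (X - C ((r:ℂ)/2))).comp (-X) = -(g₂.comp (X + C ((r:ℂ)/2))) := by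
    have := comp_shift_neg g₂ h₂ (-((r : ℂ)/2))
    simpa [sub_neg_eq_add, ← sub_eq_add_neg, map_neg] using this
  unfold brPolyPlus
  rw [sub_comp, mul_comp, mul_comp, e1, e2, e1', e2']
  ring

lemma br_mem_oddPoly {r s : ℤ} {q : Polynomial ℂ} (hq : q ∈ bracketSet r s) : q ∈ oddPoly := by
  obtain ⟨g₁, g₂, h₁, h₂, rfl⟩ := hq
  exact br_odd r s g₁ g₂ h₁ h₂

/-- The distinguished element `[t g₁(⋯), t^k g₂(⋯)]` with `g₁ = X^{2n+1}`, `g₂ = X`. -/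
noncomputable def hpol (k : ℤ) (n : ℕ) : Polynomial ℂ := brPolyPlus 1 k (X^(2*n+1)) X

lemma X_pow_odd (n : ℕ) : ((X : Polynomial ℂ)^(2*n+1)).comp (-X) = -(X^(2*n+1)) := by
  rw [X_pow_comp, Odd.neg_pow ⟨n, by ring⟩]

lemma hpol_mem (k : ℤ) (n : ℕ) : hpol k n ∈ bracketSet 1 k :=
  ⟨X^(2*n+1), X, X_pow_odd n, by simpa using X_pow_odd 0, rfl⟩

lemma hpol_odd (k : ℤ) (n : ℕ) : (hpol k n).comp (-X) = -(hpol k n) :=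
  br_odd 1 k _ _ (X_pow_odd n) (by simpa using X_pow_odd 0)

lemma hpol_eq (k : ℤ) (n : ℕ) : hpol k n =
    (X + C ((k:ℂ)/2))^(2*n+1) * (X - C (1/2)) -
      (X - C ((k:ℂ)/2))^(2*n+1) * (X + C (1/2)) := by
  unfold hpol brPolyPlus
  rw [X_pow_comp, X_pow_comp, X_comp, X_comp]
  norm_num

lemma coeff_mul_X_sub_C (p : Polynomial ℂ) (b : ℂ) (m : ℕ) :
    (p * (X - C b)).coeff (m+1) = p.coeff m - b * p.coeff (m+1) := by
  rw [mul_sub, coeff_sub, coeff_mul_X, mul_comm p, coeff_C_mul]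

lemma coeff_mul_X_add_C (p : Polynomial ℂ) (b : ℂ) (m : ℕ) :
    (p * (X + C b)).coeff (m+1) = p.coeff m + b * p.coeff (m+1) := by
  rw [mul_add, coeff_add, coeff_mul_X, mul_comm p, coeff_C_mul]

lemma coeff_X_sub_C_pow (a : ℂ) (n j : ℕ) :
    ((X - C a)^n).coeff j = (-a) ^ (n - j) * (n.choose j : ℂ) := by
  rw [sub_eq_add_neg, ← map_neg, coeff_X_add_C_pow]

lemma hpol_coeff (k : ℤ) (n : ℕ) :
    (hpol k n).coeff (2*n+1) = (2*n+1) * (k : ℂ) - 1 := by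
  rw [hpol_eq, coeff_sub]
  have h2n : 2*n+1-(2*n) = 1 := by omega
  rw [show 2*n+1 = (2*n)+1 from rfl, coeff_mul_X_sub_C, coeff_mul_X_add_C,
    coeff_X_add_C_pow, coeff_X_add_C_pow, coeff_X_sub_C_pow, coeff_X_sub_C_pow,
    h2n, Nat.sub_self]
  simp [Nat.choose_self, Nat.choose_succ_self_right]
  ring

lemma hpol_natDegree (k : ℤ) (n : ℕ) : (hpol k n).natDegree ≤ 2*n+2 := by
  rw [hpol_eq]
  refine (natDegree_sub_le _ _).trans ?_
  have h1 : ((X + C ((k:ℂ)/2))^(2*n+1) * (X - C (1/2))).natDegree ≤ 2*n+2 := by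
    refine (natDegree_mul_le).trans ?_
    have := natDegree_pow (X + C ((k:ℂ)/2)) (2*n+1)
    calc _ ≤ (2*n+1) * (X + C ((k:ℂ)/2)).natDegree + 1 := by
            rw [this]; exact add_le_add le_rfl (natDegree_X_sub_C_le _)
      _ ≤ 2*n+2 := by rw [natDegree_X_add_C]; omega
  have h2 : ((X - C ((k:ℂ)/2))^(2*n+1) * (X + C (1/2))).natDegree ≤ 2*n+2 := by
    refine (natDegree_mul_le).trans ?_
    rw [natDegree_pow, natDegree_X_sub_C, natDegree_X_add_C]
    omega
  exact max_le h1 h2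

lemma hpol_natDegree' (k : ℤ) (n : ℕ) : (hpol k n).natDegree ≤ 2*n+1 := by
  rw [natDegree_le_iff_coeff_eq_zero]
  intro m hm
  rcases eq_or_lt_of_le (Nat.succ_le_of_lt hm) with h | h
  · rw [← h]; exact odd_coeff_even _ (hpol_odd k n) ⟨n+1, by omega⟩
  · exact natDegree_le_iff_coeff_eq_zero.mp (hpol_natDegree k n) m (by omega)

lemma main_span (k : ℤ) (hk : 1 ≤ k) :
    ∀ d : ℕ, ∀ p : Polynomial ℂ, p.comp (-X) = -p → p.natDegree ≤ d →
      p ∈ Submodule.span ℂ (bracketSet 1 k) ⊔ Submodule.span ℂ {(X : Polynomial ℂ)} := by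
  intro d
  induction d using Nat.strong_induction_on with
  | _ d ih =>
    intro p hodd hdeg
    by_cases hd1 : p.natDegree ≤ 1
    · have h0 : p.coeff 0 = 0 := odd_coeff_even p hodd Even.zero
      have := eq_X_add_C_of_natDegree_le_one hd1
      rw [h0, map_zero, add_zero] at this
      exact Submodule.mem_sup_right (Submodule.mem_span_singleton.mpr
        ⟨p.coeff 1, by rw [smul_eq_C_mul]; exact this.symm⟩)
    · push_neg at hd1
      have hp0 : p ≠ 0 := fun h => by simp [h] at hd1
      set d₀ := p.natDegree with hd₀
      have hodd_d : ¬ Even d₀ := by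
        intro he
        exact hp0 (leadingCoeff_eq_zero.mp (odd_coeff_even p hodd he))
      obtain ⟨n, hn⟩ : ∃ n, d₀ = 2*n+1 := by
        rcases Nat.even_or_odd d₀ with h | ⟨n, hn⟩
        · exact absurd h hodd_d
        · exact ⟨n, by omega⟩
      have hc : ((2*n+1) * (k : ℂ) - 1) ≠ 0 := by
        have : ((2*(n:ℤ)+1) * k - 1 : ℤ) ≠ 0 := by nlinarith [hn ▸ hd1]
        intro h; exact this (by exact_mod_cast h)
      set c : ℂ := p.coeff d₀ / ((2*n+1) * (k : ℂ) - 1) with hc_def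
      set q : Polynomial ℂ := p - c • hpol k n with hq
      have hq_odd : q.comp (-X) = -q := by
        rw [hq, sub_comp, smul_comp, hodd, hpol_odd]; ring_nf; module
      have hq_coeff : q.coeff d₀ = 0 := by
        rw [hq, coeff_sub, coeff_smul, hn, hpol_coeff, smul_eq_mul, hc_def, hn]
        field_simp
        ring
      have hq_deg : q.natDegree ≤ d₀ - 1 := by
        rw [natDegree_le_iff_coeff_eq_zero]
        intro m hm
        rcases eq_or_lt_of_le (Nat.succ_le_of_lt hm) with h | h
        · have : m = d₀ := by omega
          rw [this]; exact hq_coeff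
        · have hqd : q.natDegree ≤ d₀ := by
            refine (natDegree_sub_le _ _).trans (max_le le_rfl ?_)
            refine (natDegree_smul_le _ _).trans ?_
            rw [hn]; exact hpol_natDegree' k n
          exact natDegree_le_iff_coeff_eq_zero.mp hqd m (by omega)
      have hmem_q := ih (d₀ - 1) (by omega) q hq_odd hq_deg
      have hmem_h : hpol k n ∈ Submodule.span ℂ (bracketSet 1 k) ⊔
          Submodule.span ℂ {(X : Polynomial ℂ)} :=
        Submodule.mem_sup_left (Submodule.subset_span (hpol_mem k n))
      have : p = q + c • hpol k n := by rw [hq]; ring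
      rw [this]
      exact Submodule.add_mem _ hmem_q (Submodule.smul_mem _ _ hmem_h)

lemma odd_eval_zero (g : Polynomial ℂ) (hg : g.comp (-X) = -g) : g.eval 0 = 0 := by
  have := congrArg (Polynomial.eval (0 : ℂ)) hg
  simp [eval_comp] at this
  linear_combination this/2

lemma br11_eval (g₁ g₂ : Polynomial ℂ) (h₁ : g₁.comp (-X) = -g₁) (h₂ : g₂.comp (-X) = -g₂) :
    (brPolyPlus 1 1 g₁ g₂).eval (1/2) = 0 := by
  unfold brPolyPlus
  simp [eval_comp, odd_eval_zero g₁ h₁, odd_eval_zero g₂ h₂]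

lemma span_le_odd (r s : ℤ) : Submodule.span ℂ (bracketSet r s) ≤ oddPoly :=
  Submodule.span_le.mpr fun _ hq => br_mem_oddPoly hq

lemma X_mem_odd : (X : Polynomial ℂ) ∈ oddPoly := by
  rw [mem_oddPoly, X_comp]

lemma hpol_zero (k : ℤ) : hpol k 0 = C ((k:ℂ) - 1) * X := by
  have h1 : (hpol k 0).natDegree ≤ 1 := by simpa using hpol_natDegree' k 0
  have h := eq_X_add_C_of_natDegree_le_one h1
  rw [odd_coeff_even _ (hpol_odd k 0) Even.zero, map_zero, add_zero] at h
  rw [h]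
  congr 1
  have := hpol_coeff k 0
  norm_num at this
  rw [this]

lemma X_mem_span (k : ℤ) (hk : 1 < k) :
    (X : Polynomial ℂ) ∈ Submodule.span ℂ (bracketSet 1 k) := by
  have hne : ((k : ℂ) - 1) ≠ 0 := by
    intro h
    have : ((k - 1 : ℤ) : ℂ) = 0 := by push_cast; linear_combination h
    have : (k - 1 : ℤ) = 0 := by exact_mod_cast this
    omega
  have : (X : Polynomial ℂ) = ((k:ℂ) - 1)⁻¹ • hpol k 0 := by
    rw [hpol_zero, smul_eq_C_mul, ← mul_assoc, ← C_mul, inv_mul_cancel₀ hne, C_1, one_mul]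
  rw [this]
  exact Submodule.smul_mem _ _ (Submodule.subset_span (hpol_mem k 0))

/-- `[𝒟⁺_1, 𝒟⁺_k] = 𝒟⁺_{k+1}` for `k > 1`, while
`𝒟⁺_2 = [𝒟⁺_1, 𝒟⁺_1] ⊕ ℂ·t²(D + 3/2)` (the element `t²(D + 3/2)` corresponding to the
odd polynomial `X` in the shifted variable). -/
theorem Dplus_degree_one_brackets :
    (∀ k : ℤ, 1 < k → Submodule.span ℂ (bracketSet 1 k) = oddPoly) ∧
    (Submodule.span ℂ (bracketSet 1 1) ⊔ Submodule.span ℂ {(X : Polynomial ℂ)} = oddPoly) ∧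
    (Submodule.span ℂ (bracketSet 1 1) ⊓ Submodule.span ℂ {(X : Polynomial ℂ)} = ⊥) := by
  refine ⟨?_, ?_, ?_⟩
  · intro k hk
    refine le_antisymm (span_le_odd 1 k) ?_
    intro p hp
    have hsup := main_span k hk.le p.natDegree p hp le_rfl
    have hXle : Submodule.span ℂ {(X : Polynomial ℂ)} ≤ Submodule.span ℂ (bracketSet 1 k) :=
      Submodule.span_le.mpr (by simpa using X_mem_span k hk)
    rwa [sup_of_le_left hXle] at hsup
  · refine le_antisymm (sup_le (span_le_odd 1 1) ?_) ?_
    · exact Submodule.span_le.mpr (by simpa using X_mem_odd)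
    · intro p hp
      exact main_span 1 le_rfl p.natDegree p hp le_rfl
  · rw [eq_bot_iff]
    intro p hp
    obtain ⟨h1, h2⟩ := Submodule.mem_inf.mp hp
    have heval : p.eval (1/2) = 0 := by
      have hker : Submodule.span ℂ (bracketSet 1 1) ≤ LinearMap.ker (Polynomial.leval (1/2 : ℂ)) := by
        refine Submodule.span_le.mpr ?_
        rintro q ⟨g₁, g₂, hg₁, hg₂, rfl⟩
        exact LinearMap.mem_ker.mpr (br11_eval g₁ g₂ hg₁ hg₂)
      exact LinearMap.mem_ker.mp (hker h1)
    obtain ⟨c, rfl⟩ := Submodule.mem_span_singleton.mp h2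
    have : c = 0 := by simpa [smul_eq_C_mul] using heval
    simp [this]
end
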